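/- arXiv:1602.07167 — 3 statements merged into one kernel-verified Lean document; each statement's English description precedes it below -/
import Mathlib

section
/- Let M be a matroid, F a flat of M, and let Z = cyc_M(F) be the union of all circuits of M contained in F. Then every set A with Z ⊆ A ⊆ F is a flat of M. -/
open Matroid Set
open scoped Classical

variable {α : Type*}

/-- A circuit of a matroid: a minimal dependent set. -/
def Matroid.Circuit' (M : Matroid α) (C : Set α) : Prop :=
  M.Dep C ∧ ∀ D, D ⊂ C → M.Indep D

/-- The cyclic part `cyc_M(F)` of a set `F`: the union of all circuits of `M` contained
in `F`. -/
def Matroid.cyc (M : Matroid α) (F : Set α) : Set α :=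
  ⋃₀ {C | M.Circuit' C ∧ C ⊆ F}

/-- The (extended) rank of a set in a matroid: the supremum of the cardinalities of the
independent subsets. -/
noncomputable def Matroid.eRk' (M : Matroid α) (X : Set α) : ℕ∞ :=
  ⨆ I ∈ {I | M.Indep I ∧ I ⊆ X}, I.encard

/-- The rank of a matroid. -/
noncomputable def Matroid.rk' (M : Matroid α) : ℕ∞ := M.eRk' M.E

/-- A matroid is loopfree if every element of the ground set is independent. -/
def Matroid.Loopless' (M : Matroid α) : Prop := ∀ e ∈ M.E, M.Indep {e}

/-- `U` is the matroid union `M ∨ N`: its independent sets are exactly the unions of an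
independent set of `M` and an independent set of `N`. -/
def IsMatroidUnion (M N U : Matroid α) : Prop :=
  U.E = M.E ∧ ∀ X, U.Indep X ↔ ∃ I J, M.Indep I ∧ N.Indep J ∧ X = I ∪ J

/-- `P` is the matroid intersection `M ∧ N := (M* ∨ N*)*`. -/
def IsMatroidInter (M N P : Matroid α) : Prop :=
  ∃ U, IsMatroidUnion M✶ N✶ U ∧ P = U✶

/-- Contraction of a set in a matroid, defined by duality: `M/A = (M* \ A)*`. -/
def Matroid.contract' (M : Matroid α) (A : Set α) : Matroid α := (M✶ ↾ (M.E \ A))✶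

/-- A cyclic flat: a flat which is the union of the circuits contained in it. -/
def Matroid.CyclicFlat (M : Matroid α) (F : Set α) : Prop :=
  M.IsFlat F ∧ F = M.cyc F

/-- A nested matroid: one whose cyclic flats form a chain under inclusion. -/
def Matroid.Nested (M : Matroid α) : Prop := IsChain (· ⊆ ·) {F | M.CyclicFlat F}

namespace Matroid

variable {M : Matroid α} {C F X : Set α} {e : α}

lemma circuit'_iff_isCircuit : M.Circuit' C ↔ M.IsCircuit C :=
  isCircuit_iff_forall_ssubset.symm

lemma mem_cyc_iff : e ∈ M.cyc F ↔ ∃ C ⊆ F, M.IsCircuit C ∧ e ∈ C := by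
  simp only [cyc, mem_sUnion, mem_ofPred_eq, circuit'_iff_isCircuit, and_assoc]
  exact ⟨fun ⟨C, hC, hCF, heC⟩ ↦ ⟨C, hCF, hC, heC⟩, fun ⟨C, hCF, hC, heC⟩ ↦ ⟨C, hC, hCF, heC⟩⟩

lemma mem_cyc_of_mem_closure (heX : e ∈ M.closure X) (he : e ∉ X) (hXF : insert e X ⊆ F) :
    e ∈ M.cyc F := by
  obtain ⟨C, hCX, hC, heC⟩ := (mem_closure_iff_exists_isCircuit he).1 heX
  exact mem_cyc_iff.2 ⟨C, hCX.trans hXF, hC, heC⟩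

end Matroid

theorem flat_of_between_cyc_general (M : Matroid α) (F A : Set α) (hF : M.IsFlat F)
    (hZA : M.cyc F ⊆ A) (hAF : A ⊆ F) : M.IsFlat A := by
  have hclA : M.closure A ⊆ A := by
    intro e he
    by_contra heA
    have heF : e ∈ F := hF.closure ▸ M.closure_subset_closure hAF he
    exact heA (hZA (mem_cyc_of_mem_closure he heA (insert_subset heF hAF)))
  exact isFlat_iff_closure_eq.2 (hclA.antisymm (M.subset_closure A (hAF.trans hF.subset_ground)))

/-- If `F` is a flat of a finite matroid `M` and `Z = cyc_M(F)` is the union of all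
circuits contained in `F`, then every set `A` with `Z ⊆ A ⊆ F` is a flat of `M`. -/
theorem flat_of_between_cyc (M : Matroid α) [M.Finite] (F A : Set α) (hF : M.IsFlat F)
    (hZA : M.cyc F ⊆ A) (hAF : A ⊆ F) : M.IsFlat A :=
  flat_of_between_cyc_general M F A hF hZA hAF
end

section
/- With notation as above, the chain product M_G := H_{G_1} ∧ ⋯ ∧ H_{G_k} for a chain G_1 ⊊ ⋯ ⊊ G_k with |G_k| ≤ n−2 is the transversal matroid M[A] with presentation A consisting of |G_1| copies of G_1, followed by |G_{i} \ G_{i−1}|−1 copies of G_i for i = 2,…,k, followed by |G_k^c|−1 copies of E. -/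
open Matroid Set
open scoped Classical

variable {α : Type*}

/-- `U` is the uniform matroid of rank `r` on the ground set `S`: its bases are exactly the
`r`-element subsets of `S`. -/
def IsUnifOn (S : Set α) (r : ℕ) (U : Matroid α) : Prop :=
  U.E = S ∧ ∀ B, U.IsBase B ↔ B ⊆ S ∧ B.encard = r

/-- `H` is the corank-one matroid `H_G := U_{|G|,G} ⊕ U_{|Gᶜ|-1,Gᶜ}` on the ground set
`univ` whose set of coloops is `G`. -/
def IsHG (G : Set α) (H : Matroid α) : Prop :=
  ∃ (U' : Matroid α) (hd : Disjoint (Matroid.freeOn G).E U'.E),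
    IsUnifOn Gᶜ (Gᶜ.ncard - 1) U' ∧ H = (Matroid.freeOn G).disjointSum U' hd

/-- `P` is the iterated matroid intersection of a list of matroids (the empty intersection
being the free matroid `U_{n,n}` on the ground set `univ`). -/
def IsFoldInter : List (Matroid α) → Matroid α → Prop
  | [], P => P = Matroid.freeOn Set.univ
  | M :: l, P => ∃ Q, IsFoldInter l Q ∧ IsMatroidInter M Q P

/-- `X` is a partial transversal of the set system given by the list `L`. -/
def IsPartialTransversal (L : List (Set α)) (X : Set α) : Prop :=
  ∃ f : X → Fin L.length, Function.Injective f ∧ ∀ x : X, (x : α) ∈ L.get (f x)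

/-- The transversal presentation of the chain product of the (0-indexed) chain
`G 0 ⊊ ⋯ ⊊ G (k-1)`: `|G 0|` copies of `G 0`, then `|G i \ G (i-1)| - 1` copies of `G i`
for `i = 1, …, k-1`, then `|(G (k-1))ᶜ| - 1` copies of the ground set. -/
noncomputable def chainPresentation (k : ℕ) (G : ℕ → Set α) : List (Set α) :=
  List.replicate (G 0).ncard (G 0) ++
    ((List.range (k - 1)).flatMap fun i =>
      List.replicate ((G (i + 1) \ G i).ncard - 1) (G (i + 1))) ++
    List.replicate ((G (k - 1))ᶜ.ncard - 1) Set.univ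

/-!
Dually, `H_G✶` is the rank-one uniform matroid on `Gᶜ` plus loops on `G`, so the dual of the
chain product is the union of these, namely the transversal matroid of the decreasing chain
`G₁ᶜ ⊇ ⋯ ⊇ G_kᶜ`, of rank `k`. Hence `X` is independent in the chain product iff `Xᶜ` contains
a full transversal of that chain, which by Hall's theorem for chains means
`k ≤ |G_iᶜ \ X| + i` for all `i` (indexing from `0`). Hall's theorem for the increasing chain
`𝒜_𝒢` gives the same numerical conditions: `𝒜_𝒢` has `n - k` entries, and exactly its first
`|G_i| - i` entries lie in `G_i`.
-/

section PartialTransversal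

variable {L : List (Set α)} {A X : Set α}

theorem isPartialTransversal_nil_iff : IsPartialTransversal [] X ↔ X = ∅ := by
  refine ⟨fun ⟨f, _, _⟩ => ?_, fun h => ?_⟩
  · exact Set.eq_empty_of_forall_notMem fun x hx => (f ⟨x, hx⟩).elim0
  · subst h
    exact ⟨fun x => x.2.elim, fun x => x.2.elim, fun x => x.2.elim⟩

theorem isPartialTransversal_empty (L : List (Set α)) : IsPartialTransversal L ∅ :=
  ⟨fun x => x.2.elim, fun x => x.2.elim, fun x => x.2.elim⟩

theorem isPartialTransversal_cons_iff :
    IsPartialTransversal (A :: L) X ↔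
      ∃ I J, I ⊆ A ∧ I.Subsingleton ∧ IsPartialTransversal L J ∧ X = I ∪ J := by
  constructor
  · rintro ⟨f, hf, hmem⟩
    refine ⟨{x | ∃ hx : x ∈ X, f ⟨x, hx⟩ = 0}, {x | ∃ hx : x ∈ X, f ⟨x, hx⟩ ≠ 0},
      ?_, ?_, ?_, ?_⟩
    · rintro x ⟨hx, hfx⟩
      simpa [hfx] using hmem ⟨x, hx⟩
    · rintro x ⟨hx, hfx⟩ y ⟨hy, hfy⟩
      exact Subtype.ext_iff.1 (hf (hfx.trans hfy.symm))
    · refine ⟨fun x => (f ⟨x, x.2.1⟩).pred x.2.2, fun x y hxy => ?_, fun x => ?_⟩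
      · exact Subtype.ext (congrArg (fun z : X => (z : α)) (hf (Fin.pred_inj.1 hxy)))
      · have h := hmem ⟨x, x.2.1⟩
        rw [← Fin.succ_pred _ x.2.2] at h
        simpa only [List.get_eq_getElem, Fin.val_succ, List.getElem_cons_succ] using h
    · ext x
      by_cases hx : x ∈ X
      · by_cases hfx : f ⟨x, hx⟩ = 0 <;> simp [hx, hfx]
      · simp [hx]
  · rintro ⟨I, J, hIA, hI, ⟨g, hg, hgmem⟩, rfl⟩
    refine ⟨fun x => if hx : (x : α) ∈ J then (g ⟨x, hx⟩).succ else 0, ?_, fun x => ?_⟩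
    · rintro ⟨x, hx⟩ ⟨y, hy⟩ hxy
      by_cases hxJ : x ∈ J <;> by_cases hyJ : y ∈ J <;>
        simp only [hxJ, hyJ, dite_true, dite_false, Fin.succ_inj, Fin.succ_ne_zero,
          (Fin.succ_ne_zero _).symm] at hxy
      · exact Subtype.ext (congrArg (fun z : J => (z : α)) (hg hxy))
      · exact Subtype.ext (hI (hx.resolve_right hxJ) (hy.resolve_right hyJ))
    · by_cases hxJ : (x : α) ∈ J
      · simpa [hxJ] using hgmem ⟨x, hxJ⟩
      · simpa [hxJ] using hIA (x.2.resolve_right hxJ)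

theorem IsPartialTransversal.ncard_le_length (h : IsPartialTransversal L X) :
    X.ncard ≤ L.length := by
  obtain ⟨f, hf, -⟩ := h
  simpa using Nat.card_le_card_of_injective f hf

theorem IsPartialTransversal.subset_of_forall_subset (h : IsPartialTransversal L X)
    (hA : ∀ B ∈ L, B ⊆ A) : X ⊆ A := by
  obtain ⟨f, -, hmem⟩ := h
  exact fun x hx => hA _ (List.get_mem _ _) (hmem ⟨x, hx⟩)

theorem isPartialTransversal_map_sdiff_iff :
    IsPartialTransversal (L.map (· \ A)) X ↔ IsPartialTransversal L X ∧ Disjoint X A := by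
  induction L generalizing X with
  | nil => simp +contextual [isPartialTransversal_nil_iff]
  | cons B L ih =>
    simp only [List.map_cons, isPartialTransversal_cons_iff]
    constructor
    · rintro ⟨I, J, hI, hIs, hJ, rfl⟩
      obtain ⟨hJ, hJA⟩ := ih.1 hJ
      exact ⟨⟨I, J, hI.trans Set.sdiff_subset, hIs, hJ, rfl⟩,
        Disjoint.union_left (Set.disjoint_sdiff_left.mono_left hI) hJA⟩
    · rintro ⟨⟨I, J, hI, hIs, hJ, rfl⟩, hdisj⟩
      exact ⟨I, J, Set.subset_sdiff.2 ⟨hI, hdisj.mono_left Set.subset_union_left⟩, hIs,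
        ih.2 ⟨hJ, hdisj.mono_left Set.subset_union_right⟩, rfl⟩

theorem IsPartialTransversal.ncard_sdiff_le_countP (h : IsPartialTransversal L X) (A : Set α) :
    (X \ A).ncard ≤ L.countP (¬ · ⊆ A) := by
  induction L generalizing X with
  | nil => simp [isPartialTransversal_nil_iff.1 h]
  | cons B L ih =>
    obtain ⟨I, J, hIB, hI, hJ, rfl⟩ := isPartialTransversal_cons_iff.1 h
    have hIA : (I \ A).ncard ≤ if B ⊆ A then 0 else 1 := by
      split_ifs with hBA
      · simp [Set.sdiff_eq_empty.2 (hIB.trans hBA)]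
      · exact (Set.ncard_le_one (hI.anti Set.sdiff_subset).finite).2 (hI.anti Set.sdiff_subset)
    calc ((I ∪ J) \ A).ncard ≤ (I \ A).ncard + (J \ A).ncard := by
          rw [Set.union_sdiff_distrib]; exact Set.ncard_union_le _ _
      _ ≤ L.countP (¬ · ⊆ A) + if B ⊆ A then 0 else 1 := by have := ih hJ; omega
      _ = (B :: L).countP (¬ · ⊆ A) := by rw [List.countP_cons]; by_cases B ⊆ A <;> simp [*]

/-- Hall's theorem for an increasing chain: the deficiency conditions at the members of the
chain suffice. -/
theorem isPartialTransversal_of_ncard_sdiff_le [Finite α] (hL : L.Pairwise (· ⊆ ·))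
    (hX : X.ncard ≤ L.length) (h : ∀ A ∈ L, (X \ A).ncard ≤ L.countP (¬ · ⊆ A)) :
    IsPartialTransversal L X := by
  induction L generalizing X with
  | nil => exact isPartialTransversal_nil_iff.2 ((Set.ncard_eq_zero).1 (Nat.le_zero.1 hX))
  | cons B L ih =>
    obtain ⟨hBL, hL⟩ := List.pairwise_cons.1 hL
    have hcount : ∀ A ∈ L, (B :: L).countP (¬ · ⊆ A) = L.countP (¬ · ⊆ A) := fun A hA =>
      List.countP_cons_of_neg (by simpa using hBL A hA)
    -- put one element of `X ∩ B`, if there is one, at the position of `B`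
    obtain ⟨I, hIX, hIB, hI, hXI⟩ :
        ∃ I ⊆ X, I ⊆ B ∧ I.Subsingleton ∧ (X \ I).ncard ≤ L.length := by
      by_cases hXB : (X ∩ B).Nonempty
      · obtain ⟨x, hxX, hxB⟩ := hXB
        refine ⟨{x}, by simpa, by simpa, Set.subsingleton_singleton, ?_⟩
        rw [Set.ncard_sdiff_singleton_of_mem hxX]
        simpa using hX
      · refine ⟨∅, Set.empty_subset _, Set.empty_subset _, Set.subsingleton_empty, ?_⟩
        have hB := h B List.mem_cons_self
        rw [List.countP_cons_of_neg (by simp)] at hB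
        rw [Set.sdiff_empty]
        calc X.ncard = (X \ B).ncard := by
              rw [(Set.disjoint_iff_inter_eq_empty.2
                (Set.not_nonempty_iff_eq_empty.1 hXB)).sdiff_eq_left]
        _ ≤ L.length := hB.trans List.countP_le_length
    refine isPartialTransversal_cons_iff.2 ⟨I, X \ I, hIB, hI, ih hL hXI fun A hA => ?_, ?_⟩
    · rw [← hcount A hA]
      exact (Set.ncard_le_ncard (Set.sdiff_subset_sdiff_left Set.sdiff_subset)).trans
        (h A (List.mem_cons_of_mem _ hA))
    · rw [Set.union_sdiff_cancel hIX]

theorem exists_isPartialTransversal_ncard_eq_length_iff [Finite α] (hL : L.Pairwise (· ⊇ ·)) :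
    (∃ Y, IsPartialTransversal L Y ∧ Y.ncard = L.length) ↔
      ∀ i (hi : i < L.length), L.length ≤ L[i].ncard + i := by
  induction L with
  | nil => simpa using ⟨∅, isPartialTransversal_empty _, Set.ncard_empty α⟩
  | cons B L ih =>
    obtain ⟨hBL, hL⟩ := List.pairwise_cons.1 hL
    simp only [List.length_cons, Nat.forall_lt_succ_left', List.getElem_cons_zero,
      List.getElem_cons_succ, add_zero]
    constructor
    · rintro ⟨Y, hY, hYc⟩
      obtain ⟨I, J, hIB, hI, hJ, rfl⟩ := isPartialTransversal_cons_iff.1 hY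
      have hJc : J.ncard = L.length := by
        have := (Set.ncard_le_one hI.finite).2 hI
        have := Set.ncard_union_le I J
        have := hJ.ncard_le_length
        omega
      refine ⟨?_, fun i hi => ?_⟩
      · rw [← hYc]
        exact Set.ncard_le_ncard (Set.union_subset hIB (hJ.subset_of_forall_subset hBL))
      · have := (ih hL).1 ⟨J, hJ, hJc⟩ i hi
        omega
    · rintro ⟨hB, htail⟩
      obtain ⟨J, hJ, hJc⟩ := (ih hL).2 fun i hi => by have := htail i hi; omega
      obtain ⟨x, hxB, hxJ⟩ :=
        Set.exists_mem_notMem_of_ncard_lt_ncard (s := J) (t := B) (by omega)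
      refine ⟨{x} ∪ J, isPartialTransversal_cons_iff.2 ⟨{x}, J, by simpa, by simp, hJ, rfl⟩, ?_⟩
      rw [Set.singleton_union, Set.ncard_insert_of_notMem hxJ, hJc]

end PartialTransversal

theorem Matroid.isBase_iff_indep_ncard_eq [Finite α] {M : Matroid α} {k : ℕ}
    (hle : ∀ I, M.Indep I → I.ncard ≤ k) (hex : ∃ I, M.Indep I ∧ I.ncard = k) {B : Set α} :
    M.IsBase B ↔ M.Indep B ∧ B.ncard = k := by
  obtain ⟨I, hI, hIk⟩ := hex
  obtain ⟨B₀, hB₀, hIB₀⟩ := hI.exists_isBase_superset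
  have hB₀k : B₀.ncard = k := le_antisymm (hle _ hB₀.indep) (hIk ▸ Set.ncard_le_ncard hIB₀)
  refine ⟨fun hB => ⟨hB.indep, (hB.ncard_eq_ncard_of_isBase hB₀).trans hB₀k⟩,
    fun ⟨hB, hBk⟩ => hB.isBase_of_maximal fun J hJ hBJ => ?_⟩
  exact Set.eq_of_subset_of_ncard_le hBJ (hBk ▸ hle J hJ)

section CorankOne

variable {G B J : Set α} {H : Matroid α}

theorem IsHG.ground_eq (h : IsHG G H) : H.E = univ := by
  obtain ⟨U, hd, ⟨hUE, -⟩, rfl⟩ := h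
  simp [hUE]

theorem IsHG.isBase_iff [Finite α] (h : IsHG G H) :
    H.IsBase B ↔ G ⊆ B ∧ (B ∩ Gᶜ).ncard = Gᶜ.ncard - 1 := by
  obtain ⟨U, hd, ⟨hUE, hU⟩, rfl⟩ := h
  rw [Matroid.disjointSum_isBase_iff, Matroid.freeOn_isBase_iff, hUE, hU,
    Matroid.freeOn_ground, ← (Set.toFinite _).cast_ncard_eq, Nat.cast_inj]
  simp [Set.inter_eq_right]

theorem IsHG.dual_indep_iff [Finite α] (h : IsHG G H) :
    H✶.Indep J ↔ J ⊆ Gᶜ ∧ J.Subsingleton := by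
  rw [Matroid.dual_indep_iff_exists', h.ground_eq]
  simp only [Set.subset_univ, true_and, h.isBase_iff]
  constructor
  · rintro ⟨B, ⟨hGB, hBc⟩, hJB⟩
    have hJG : J ⊆ Gᶜ := fun x hxJ hxG => hJB.notMem_of_mem_left hxJ (hGB hxG)
    have hJ : J ⊆ Gᶜ \ (B ∩ Gᶜ) := fun x hxJ =>
      ⟨hJG hxJ, fun hxB => hJB.notMem_of_mem_left hxJ hxB.1⟩
    refine ⟨hJG, (Set.ncard_le_one_iff_subsingleton).1 ((Set.ncard_le_ncard hJ).trans ?_)⟩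
    rw [Set.ncard_sdiff Set.inter_subset_right, hBc]
    omega
  · rintro ⟨hJG, hJ⟩
    have hJc : J.ncard ≤ 1 := Set.ncard_le_one_iff_subsingleton.2 hJ
    obtain ⟨B, hB, hBc⟩ := Set.exists_subset_encard_eq (s := Gᶜ \ J) (k := (Gᶜ.ncard - 1 : ℕ))
      (by rw [← (Set.toFinite _).cast_ncard_eq, Nat.cast_le, Set.ncard_sdiff hJG]; omega)
    rw [← (Set.toFinite _).cast_ncard_eq, Nat.cast_inj] at hBc
    have hBG : B ⊆ Gᶜ := hB.trans Set.sdiff_subset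
    refine ⟨G ∪ B, ⟨Set.subset_union_left, ?_⟩, ?_⟩
    · rwa [Set.union_inter_distrib_right, Set.inter_compl_self, Set.empty_union,
        Set.inter_eq_left.2 hBG]
    · exact Set.disjoint_union_right.2 ⟨Set.subset_compl_iff_disjoint_right.1 hJG,
        (Set.subset_sdiff.1 hB).2.symm⟩

end CorankOne

theorem isFoldInter_dual_indep_iff {l : List (Matroid α)} {S : List (Set α)}
    (hlS : List.Forall₂ (fun M A => M.E = univ ∧ ∀ J, M✶.Indep J ↔ J ⊆ A ∧ J.Subsingleton) l S)
    {P : Matroid α} (hP : IsFoldInter l P) :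
    P.E = univ ∧ ∀ X, P✶.Indep X ↔ IsPartialTransversal S X := by
  induction hlS generalizing P with
  | nil =>
    subst hP
    simp [isPartialTransversal_nil_iff]
  | @cons M A l S hMA _ ih =>
    obtain ⟨Q, hQ, U, ⟨hUE, hU⟩, rfl⟩ := hP
    obtain ⟨-, hQ⟩ := ih hQ
    refine ⟨by rw [Matroid.dual_ground, hUE, Matroid.dual_ground, hMA.1], fun X => ?_⟩
    simp only [Matroid.dual_dual, hU, hMA.2, hQ, isPartialTransversal_cons_iff, and_assoc]

theorem Matroid.indep_iff_of_dual_indep_iff_isPartialTransversal [Finite α] {P : Matroid α}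
    {T : List (Set α)} (hT : T.Pairwise (· ⊇ ·))
    (hfull : ∀ i (hi : i < T.length), T.length ≤ T[i].ncard + i)
    (hP : ∀ Y, P✶.Indep Y ↔ IsPartialTransversal T Y) {X : Set α} :
    P.Indep X ↔ X ⊆ P.E ∧ ∀ i (hi : i < T.length), T.length ≤ (T[i] \ X).ncard + i := by
  have hbase : ∀ B, P✶.IsBase B ↔ IsPartialTransversal T B ∧ B.ncard = T.length := fun B => by
    simp only [← hP]
    refine Matroid.isBase_iff_indep_ncard_eq (fun I hI => ((hP I).1 hI).ncard_le_length) ?_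
    simpa only [hP] using (exists_isPartialTransversal_ncard_eq_length_iff hT).2 hfull
  have hTX : (T.map (· \ X)).Pairwise (· ⊇ ·) :=
    List.pairwise_map.2 (hT.imp fun h => Set.sdiff_subset_sdiff_left h)
  have hfullX := exists_isPartialTransversal_ncard_eq_length_iff hTX
  simp only [List.length_map, List.getElem_map, isPartialTransversal_map_sdiff_iff] at hfullX
  conv_lhs => rw [← P.dual_dual]
  rw [Matroid.dual_indep_iff_exists', Matroid.dual_ground, ← hfullX]
  exact and_congr_right fun _ => exists_congr fun B => by rw [hbase, disjoint_comm]; tauto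

theorem Set.ncard_compl_sdiff_add_ncard_sdiff_add_ncard [Finite α] (A X : Set α) :
    (Aᶜ \ X).ncard + (X \ A).ncard + A.ncard = Nat.card α := by
  rw [add_assoc, Set.ncard_sdiff_add_ncard, ← Set.ncard_add_ncard_compl (X ∪ A), add_comm]
  congr 2
  ext
  simp [and_comm]

noncomputable def chainBlocks (G : ℕ → Set α) (m : ℕ) : List (Set α) :=
  (List.range m).flatMap fun i => List.replicate ((G (i + 1) \ G i).ncard - 1) (G (i + 1))

theorem chainPresentation_eq (k : ℕ) (G : ℕ → Set α) :
    chainPresentation k G = List.replicate (G 0).ncard (G 0) ++ chainBlocks G (k - 1) ++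
      List.replicate ((G (k - 1))ᶜ.ncard - 1) univ := rfl

theorem chainBlocks_add (G : ℕ → Set α) (a b : ℕ) :
    chainBlocks G (a + b) = chainBlocks G a ++ chainBlocks (fun j => G (a + j)) b := by
  simp only [chainBlocks, List.range_add, List.flatMap_append, List.flatMap_map]
  rfl

theorem mem_chainBlocks {G : ℕ → Set α} {m : ℕ} {A : Set α} (hA : A ∈ chainBlocks G m) :
    ∃ j < m, A = G (j + 1) := by
  obtain ⟨j, hj, hAj⟩ := List.mem_flatMap.1 hA
  exact ⟨j, List.mem_range.1 hj, List.eq_of_mem_replicate hAj⟩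

section Chain

variable {k : ℕ} {G : ℕ → Set α}

theorem mem_chainPresentation (hk : 1 ≤ k) {A : Set α} (hA : A ∈ chainPresentation k G) :
    A = univ ∨ ∃ i < k, A = G i := by
  simp only [chainPresentation_eq, List.mem_append] at hA
  rcases hA with (hA | hA) | hA
  · exact Or.inr ⟨0, hk, List.eq_of_mem_replicate hA⟩
  · obtain ⟨j, hj, rfl⟩ := mem_chainBlocks hA
    exact Or.inr ⟨j + 1, by omega, rfl⟩
  · exact Or.inl (List.eq_of_mem_replicate hA)

theorem subset_of_le_of_chain (hchain : ∀ i j, i < j → j < k → G i ⊂ G j) {i j : ℕ}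
    (hij : i ≤ j) (hj : j < k) : G i ⊆ G j :=
  hij.eq_or_lt.elim (fun h => h ▸ subset_rfl) fun h => (hchain i j h hj).subset

theorem ncard_add_sub_le_ncard_of_chain [Finite α] (hchain : ∀ i j, i < j → j < k → G i ⊂ G j)
    {i j : ℕ} (hij : i ≤ j) (hj : j < k) : (G i).ncard + (j - i) ≤ (G j).ncard := by
  induction j, hij using Nat.le_induction with
  | base => simp
  | succ j hij ih =>
    have := Set.ncard_lt_ncard (hchain j (j + 1) (by omega) hj)
    have := ih (by omega)
    omega

theorem length_chainBlocks [Finite α] (hchain : ∀ i j, i < j → j < k → G i ⊂ G j) {m : ℕ}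
    (hm : m < k) : (chainBlocks G m).length + (G 0).ncard + m = (G m).ncard := by
  induction m with
  | zero => simp [chainBlocks]
  | succ m ih =>
    have hsub := hchain m (m + 1) (by omega) hm
    have hlast : (chainBlocks (fun j => G (m + j)) 1).length =
        (G (m + 1)).ncard - (G m).ncard - 1 := by
      simp [chainBlocks, Set.ncard_sdiff hsub.subset]
    have := ih (by omega)
    have := Set.ncard_lt_ncard hsub
    rw [chainBlocks_add, List.length_append, hlast]
    omega

theorem length_chainPresentation [Finite α] (hchain : ∀ i j, i < j → j < k → G i ⊂ G j)
    (hk : 1 ≤ k) (hlt : (G (k - 1)).ncard < Nat.card α) :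
    (chainPresentation k G).length + k = Nat.card α := by
  have := length_chainBlocks hchain (m := k - 1) (by omega)
  have := Set.ncard_add_ncard_compl (G (k - 1))
  simp only [chainPresentation_eq, List.length_append, List.length_replicate]
  omega

theorem pairwise_chainPresentation (hchain : ∀ i j, i < j → j < k → G i ⊂ G j) :
    (chainPresentation k G).Pairwise (· ⊆ ·) := by
  have hblocks : (chainBlocks G (k - 1)).Pairwise (· ⊆ ·) := by
    refine List.pairwise_flatMap.2 ⟨fun _ _ => List.pairwise_replicate.2 (Or.inr subset_rfl), ?_⟩
    refine List.pairwise_lt_range.imp_of_mem fun ha hb hab x hx y hy => ?_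
    rw [List.eq_of_mem_replicate hx, List.eq_of_mem_replicate hy]
    exact subset_of_le_of_chain hchain (by omega) (by simp at hb; omega)
  simp only [chainPresentation_eq, List.pairwise_append, List.pairwise_replicate]
  refine ⟨⟨Or.inr subset_rfl, hblocks, fun A hA B hB => ?_⟩, Or.inr subset_rfl,
    fun _ _ B hB => by simp [List.eq_of_mem_replicate hB]⟩
  obtain ⟨j, hj, rfl⟩ := mem_chainBlocks hB
  rw [List.eq_of_mem_replicate hA]
  exact subset_of_le_of_chain hchain (by omega) (by omega)

/-- The entries of the presentation contained in `G i` are its first `|G i| - i` entries. -/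
theorem countP_subset_chainPresentation [Finite α]
    (hchain : ∀ i j, i < j → j < k → G i ⊂ G j) (hlt : (G (k - 1)).ncard < Nat.card α)
    {i : ℕ} (hi : i < k) : (chainPresentation k G).countP (· ⊆ G i) = (G i).ncard - i := by
  have hblocks := chainBlocks_add G i (k - 1 - i)
  rw [Nat.add_sub_cancel' (by omega)] at hblocks
  have hsplit : chainPresentation k G =
      (List.replicate (G 0).ncard (G 0) ++ chainBlocks G i) ++
        (chainBlocks (fun j => G (i + j)) (k - 1 - i) ++
          List.replicate ((G (k - 1))ᶜ.ncard - 1) univ) := by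
    rw [chainPresentation_eq, hblocks]
    simp only [List.append_assoc]
  have hprefix : ∀ A ∈ List.replicate (G 0).ncard (G 0) ++ chainBlocks G i, A ⊆ G i := by
    intro A hA
    rcases List.mem_append.1 hA with hA | hA
    · exact List.eq_of_mem_replicate hA ▸ subset_of_le_of_chain hchain (Nat.zero_le i) hi
    · obtain ⟨j, hj, rfl⟩ := mem_chainBlocks hA
      exact subset_of_le_of_chain hchain (by omega) hi
  have hsuffix : ∀ A ∈ chainBlocks (fun j => G (i + j)) (k - 1 - i) ++
      List.replicate ((G (k - 1))ᶜ.ncard - 1) univ, ¬ A ⊆ G i := by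
    intro A hA
    rcases List.mem_append.1 hA with hA | hA
    · obtain ⟨j, hj, rfl⟩ := mem_chainBlocks hA
      exact not_subset_of_ssubset (hchain i (i + (j + 1)) (by omega) (by omega))
    · rw [List.eq_of_mem_replicate hA, Set.univ_subset_iff]
      intro hGi
      have := Set.ncard_le_ncard (subset_of_le_of_chain hchain (by omega : i ≤ k - 1) (by omega))
      rw [hGi, Set.ncard_univ] at this
      omega
  rw [hsplit, List.countP_append, List.countP_eq_length.2 (by simpa using hprefix),
    List.countP_eq_zero.2 (by simpa using hsuffix), List.length_append, List.length_replicate]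
  have := length_chainBlocks hchain hi
  omega

theorem isPartialTransversal_chainPresentation_iff [Finite α]
    (hchain : ∀ i j, i < j → j < k → G i ⊂ G j) (hk : 1 ≤ k)
    (hlt : (G (k - 1)).ncard < Nat.card α) {X : Set α} :
    IsPartialTransversal (chainPresentation k G) X ↔ ∀ i < k, k ≤ ((G i)ᶜ \ X).ncard + i := by
  have hlen := length_chainPresentation hchain hk hlt
  have hcount : ∀ i < k, (chainPresentation k G).countP (¬ · ⊆ G i) + (G i).ncard =
      (chainPresentation k G).length + i := fun i hi => by
    have hsum := List.length_eq_countP_add_countP (fun B => decide (B ⊆ G i))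
      (l := chainPresentation k G)
    simp only [decide_eq_true_eq] at hsum
    have := countP_subset_chainPresentation hchain hlt hi
    have := ncard_add_sub_le_ncard_of_chain hchain (Nat.zero_le i) hi
    omega
  have hcard := fun i => Set.ncard_compl_sdiff_add_ncard_sdiff_add_ncard (G i) X
  constructor
  · intro hX i hi
    have := hX.ncard_sdiff_le_countP (G i)
    have := hcount i hi
    have := hcard i
    omega
  · intro hX
    refine isPartialTransversal_of_ncard_sdiff_le (pairwise_chainPresentation hchain) ?_
      fun A hA => ?_
    · have := Set.ncard_le_ncard_sdiff_add_ncard X (G 0)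
      have := hX 0 hk
      have := hcard 0
      omega
    · rcases mem_chainPresentation hk hA with rfl | ⟨i, hi, rfl⟩
      · simp
      · have := hX i hi
        have := hcount i hi
        have := hcard i
        omega

end Chain

/-- The chain product `M_𝒢 = H_{G_1} ∧ ⋯ ∧ H_{G_k}` is the transversal matroid
`M[𝒜_𝒢]` with presentation `chainPresentation`. -/
theorem chainProduct_eq_transversal [Fintype α] {k : ℕ} (hk : 1 ≤ k) (G : ℕ → Set α)
    (hchain : ∀ i j, i < j → j < k → G i ⊂ G j)
    (hsize : (G (k - 1)).ncard ≤ Fintype.card α - 2)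
    (H : ℕ → Matroid α) (hH : ∀ i < k, IsHG (G i) (H i))
    (P : Matroid α) (hP : IsFoldInter (List.ofFn fun i : Fin k => H i) P) :
    P.E = Set.univ ∧
      ∀ X, P.Indep X ↔ IsPartialTransversal (chainPresentation k G) X := by
  set T := List.ofFn fun i : Fin k => (G i)ᶜ
  obtain ⟨hPE, hPT⟩ := isFoldInter_dual_indep_iff (S := T) (List.forall₂_iff_get.2
    ⟨by simp [T], fun i hi _ => by
      have hHi := hH i (by simpa using hi)
      simpa [T] using ⟨hHi.ground_eq, fun J => hHi.dual_indep_iff⟩⟩) hP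
  refine ⟨hPE, fun X => ?_⟩
  -- `Fintype.card α - 2` truncates, so `hsize` says nothing when `α` is empty
  rcases isEmpty_or_nonempty α with hα | hα
  · rw [Subsingleton.elim X ∅]
    exact iff_of_true P.empty_indep (isPartialTransversal_empty _)
  have hlt : (G (k - 1)).ncard < Nat.card α := by
    have := Fintype.card_pos (α := α)
    rw [Nat.card_eq_fintype_card]
    omega
  have hT : T.Pairwise (· ⊇ ·) := List.pairwise_ofFn.2 fun i j hij =>
    Set.compl_subset_compl.2 (hchain i j hij j.2).subset
  have hfull : ∀ i (hi : i < T.length), T.length ≤ T[i].ncard + i := by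
    simp only [T, List.length_ofFn, List.getElem_ofFn]
    intro i hi
    have := ncard_add_sub_le_ncard_of_chain hchain (by omega : i ≤ k - 1) (by omega)
    have := Set.ncard_add_ncard_compl (G i)
    omega
  rw [Matroid.indep_iff_of_dual_indep_iff_isPartialTransversal hT hfull hPT,
    isPartialTransversal_chainPresentation_iff hchain hk hlt, hPE]
  simp [T]
end

section
/- Let M be a matroid of rank at least 2 on ground set E and H_G a corank-one matroid such that M ∧ H_G is loopfree. A set F that is a flat of both M and H_G is a flat of M ∧ H_G if and only if either F ∪ G = E, or there is no flat F' of M covering F with F' ∪ G = E. -/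
open Matroid Set
open scoped Classical

variable {α : Type*}

/-!
Dually, `M ∧ H_G = (M✶ ∨ H_G✶)✶`, and `H_G✶` is the rank-one matroid whose nonloops are the
(pairwise parallel) elements of `Gᶜ`. Since `M ∧ H_G` is loopless, some element of `Gᶜ` is not a
loop of `M`, and then `M ∧ H_G` is the principal truncation of `M` at `Gᶜ`: its independent sets
are those of `M` whose closure does not contain `Gᶜ`. A flat of `M` containing `Gᶜ` stays closed
under this truncation. For a flat `F` of `M` missing a point of `Gᶜ`, the truncation agrees with
`M` on subsets of `F`, so a point `x ∉ F` lies in the truncated closure of `F` exactly when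
`Gᶜ ⊆ cl_M(F + x)`; and the flats `cl_M(F + x)` are precisely the flats of `M` covering `F`.
-/

theorem Set.Finite.encard_eq_ncard_sub_one_iff {S T : Set α} (hS : S.Finite) (hTS : T ⊆ S)
    (hne : S.Nonempty) : T.encard = (S.ncard - 1 : ℕ) ↔ ∃ e ∈ S, T = S \ {e} := by
  constructor
  · intro hT
    have hTcard : T.ncard = S.ncard - 1 := by
      rw [← Nat.cast_inj (R := ℕ∞), (hS.subset hTS).cast_ncard_eq, hT]
    have hdiff : (S \ T).ncard = 1 := by
      have := hne.ncard_pos hS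
      rw [ncard_sdiff hTS (hS.subset hTS)]
      omega
    obtain ⟨e, he⟩ := ncard_eq_one.mp hdiff
    refine ⟨e, (he ▸ mem_singleton e : e ∈ S \ T).1, ?_⟩
    rw [← he, sdiff_sdiff_cancel_left hTS]
  · rintro ⟨e, he, rfl⟩
    rw [encard_sdiff_singleton_of_mem he, ← hS.cast_ncard_eq, ENat.natCast_sub, Nat.cast_one]

namespace Matroid

variable {M : Matroid α} {F F' T X : Set α} {x : α}

theorem rk'_le_encard_ground (M : Matroid α) : M.rk' ≤ M.E.encard :=
  iSup₂_le fun _ hI => encard_le_encard hI.2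

theorem IsFlat.closure_subset_of_subset (hF : M.IsFlat F) (hXF : X ⊆ F) : M.closure X ⊆ F :=
  (M.closure_subset_closure hXF).trans hF.closure.subset

theorem isFlat_iff_closure_subset (hF : F ⊆ M.E) : M.IsFlat F ↔ M.closure F ⊆ F :=
  ⟨fun h => h.closure.subset, fun h => isFlat_iff_closure_eq.2 (h.antisymm (M.subset_closure F))⟩

theorem IsFlat.ssubset_closure_insert (hF : M.IsFlat F) (hx : x ∈ M.E \ F) :
    F ⊂ M.closure (insert x F) :=
  have hxF : insert x F ⊆ M.E := insert_subset hx.1 hF.subset_ground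
  ssubset_of_subset_of_ne ((subset_insert x F).trans (M.subset_closure _ hxF))
    fun h => hx.2 (h ▸ M.mem_closure_of_mem (mem_insert x F) hxF)

theorem IsFlat.covBy_iff_eq_closure_insert (hF : M.IsFlat F) :
    (M.IsFlat F' ∧ F ⊂ F' ∧ ¬ ∃ F'', M.IsFlat F'' ∧ F ⊂ F'' ∧ F'' ⊂ F') ↔
      ∃ x ∈ M.E \ F, F' = M.closure (insert x F) := by
  constructor
  · rintro ⟨hF', hFF', hcov⟩
    obtain ⟨x, hxF', hxF⟩ := exists_of_ssubset hFF'
    have hx : x ∈ M.E \ F := ⟨hF'.subset_ground hxF', hxF⟩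
    have hsub : M.closure (insert x F) ⊆ F' :=
      hF'.closure_subset_of_subset (insert_subset hxF' hFF'.subset)
    exact ⟨x, hx, by_contra fun hne => hcov ⟨_, M.isFlat_closure _,
      hF.ssubset_closure_insert hx, hsub.ssubset_of_ne (Ne.symm hne)⟩⟩
  · rintro ⟨x, hx, rfl⟩
    refine ⟨M.isFlat_closure _, hF.ssubset_closure_insert hx, ?_⟩
    rintro ⟨F'', hF'', hFF'', hF''x⟩
    obtain ⟨y, hyF'', hyF⟩ := exists_of_ssubset hFF''
    have hxy : x ∈ M.closure (insert y F) :=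
      (closure_exchange ⟨hF''x.subset hyF'', hF.closure.symm ▸ hyF⟩).1
    have hxF'' : x ∈ F'' := hF''.closure_subset_of_subset (insert_subset hyF'' hFF''.subset) hxy
    exact hF''x.not_subset (hF''.closure_subset_of_subset (insert_subset hxF'' hFF''.subset))

theorem IsFlat.exists_covBy_superset_iff (hF : M.IsFlat F) :
    (∃ F', M.IsFlat F' ∧ F ⊂ F' ∧ (¬ ∃ F'', M.IsFlat F'' ∧ F ⊂ F'' ∧ F'' ⊂ F') ∧ T ⊆ F') ↔
      ∃ x ∈ M.E \ F, T ⊆ M.closure (insert x F) := by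
  refine ⟨fun ⟨F', hF', hFF', hcov, hT⟩ => ?_, fun ⟨x, hx, hT⟩ => ?_⟩
  · obtain ⟨x, hx, rfl⟩ := hF.covBy_iff_eq_closure_insert.1 ⟨hF', hFF', hcov⟩
    exact ⟨x, hx, hT⟩
  · obtain ⟨hF', hFF', hcov⟩ := hF.covBy_iff_eq_closure_insert.2 ⟨x, hx, rfl⟩
    exact ⟨_, hF', hFF', hcov, hT⟩

end Matroid

/-- `U` is the union of `N` with the rank-one matroid whose nonloops are the elements of `S`,
all parallel to each other. -/
def IsRankOneUnion (N : Matroid α) (S : Set α) (U : Matroid α) : Prop :=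
  U.E = N.E ∧ ∀ X, U.Indep X ↔ ∃ e ∈ S, N.Indep (X \ {e})

theorem IsMatroidUnion.isRankOneUnion {N L U : Matroid α} {S : Set α}
    (hU : IsMatroidUnion N L U) (hL : ∀ J, L.Indep J ↔ ∃ e ∈ S, J ⊆ {e}) :
    IsRankOneUnion N S U := by
  refine ⟨hU.1, fun X => ?_⟩
  rw [hU.2]
  constructor
  · rintro ⟨I, J, hI, hJ, rfl⟩
    obtain ⟨e, he, hJe⟩ := (hL J).1 hJ
    refine ⟨e, he, hI.subset ?_⟩
    rw [sdiff_subset_iff]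
    exact union_subset subset_union_right (hJe.trans subset_union_left)
  · rintro ⟨e, he, hX⟩
    exact ⟨X \ {e}, X ∩ {e}, hX, (hL _).2 ⟨e, he, inter_subset_right⟩,
      (sdiff_union_inter X {e}).symm⟩

namespace IsRankOneUnion

variable {N U : Matroid α} {S I X B : Set α} {e : α}

theorem subset_ground (hU : IsRankOneUnion N S U) : S ⊆ N.E := fun e he =>
  hU.1 ▸ ((hU.2 {e}).2 ⟨e, he, by simp⟩).subset_ground rfl

theorem indep_insert (hU : IsRankOneUnion N S U) (hI : N.Indep I) (he : e ∈ S) :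
    U.Indep (insert e I) :=
  (hU.2 _).2 ⟨e, he, hI.subset (by simp)⟩

theorem eq_of_forall_isColoop (hU : IsRankOneUnion N S U) (hS : S.Nonempty)
    (h : ∀ e ∈ S, N.IsColoop e) : U = N := by
  refine ext_indep hU.1 fun X _ => ⟨fun hX => ?_, fun hX => ?_⟩
  · obtain ⟨e, he, hXe⟩ := (hU.2 X).1 hX
    exact ((h e he).insert_indep_of_indep hXe).subset (subset_insert_sdiff_singleton e X)
  · obtain ⟨e, he⟩ := hS
    exact (hU.2 X).2 ⟨e, he, hX.subset sdiff_subset⟩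

theorem exists_not_isColoop (hU : IsRankOneUnion N S U) (hS : S.Nonempty)
    (hU' : U✶.Loopless') : ∃ e ∈ S, ¬ N.IsColoop e := by
  by_contra! h
  obtain ⟨g, hg⟩ := hS
  have hgU : U✶.Indep {g} := hU' g (hU.1 ▸ hU.subset_ground hg)
  rw [hU.eq_of_forall_isColoop ⟨g, hg⟩ h] at hgU
  exact (h g hg).dual_isLoop.not_indep_of_mem (mem_singleton g) hgU

theorem encard_le_eRank_add_one (hU : IsRankOneUnion N S U) (hX : U.Indep X) :
    X.encard ≤ N.eRank + 1 := by
  obtain ⟨e, -, hXe⟩ := (hU.2 X).1 hX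
  calc X.encard ≤ (insert e (X \ {e})).encard :=
        encard_le_encard (subset_insert_sdiff_singleton e X)
    _ ≤ (X \ {e}).encard + 1 := encard_insert_le _ _
    _ ≤ N.eRank + 1 := by gcongr; exact hXe.encard_le_eRank

theorem eRank_eq (hU : IsRankOneUnion N S U) (hS : ∃ e ∈ S, ¬ N.IsColoop e) :
    U.eRank = N.eRank + 1 := by
  obtain ⟨B, hB⟩ := U.exists_isBase
  obtain ⟨e, he, hne⟩ := hS
  obtain ⟨B₀, hB₀, heB₀⟩ : ∃ B₀, N.IsBase B₀ ∧ e ∉ B₀ := by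
    simpa [isColoop_iff_forall_mem_isBase] using hne
  refine le_antisymm (hB.encard_eq_eRank ▸ hU.encard_le_eRank_add_one hB.indep) ?_
  calc N.eRank + 1 = (insert e B₀).encard := by
        rw [encard_insert_of_notMem heB₀, hB₀.encard_eq_eRank]
    _ ≤ U.eRank := (hU.indep_insert hB₀.indep he).encard_le_eRank

theorem isBase_iff [N.RankFinite] (hU : IsRankOneUnion N S U)
    (hS : ∃ e ∈ S, ¬ N.IsColoop e) :
    U.IsBase B ↔ ∃ B₀, N.IsBase B₀ ∧ ∃ e ∈ S, e ∉ B₀ ∧ B = insert e B₀ := by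
  constructor
  · intro hB
    obtain ⟨e, he, hBe⟩ := (hU.2 B).1 hB.indep
    obtain ⟨B₀, hB₀, hsub⟩ := hBe.exists_isBase_superset
    have hBeq : B = insert e B₀ := hB.eq_of_subset_indep (hU.indep_insert hB₀.indep he)
      (sdiff_singleton_subset_iff.1 hsub)
    refine ⟨B₀, hB₀, e, he, fun heB₀ => ?_, hBeq⟩
    have hcard := hB.encard_eq_eRank
    rw [hBeq, insert_eq_of_mem heB₀, hB₀.encard_eq_eRank, hU.eRank_eq hS] at hcard
    exact ((ENat.lt_add_one_iff (N.eRank_ne_top_iff.2 ‹_›)).2 le_rfl).ne hcard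
  · rintro ⟨B₀, hB₀, e, he, heB₀, rfl⟩
    have hI := hU.indep_insert hB₀.indep he
    refine hI.isBase_of_eRk_ge (hB₀.finite.insert e) ?_
    rw [hI.eRk_eq_encard, encard_insert_of_notMem heB₀, hB₀.encard_eq_eRank, hU.eRank_eq hS]

end IsRankOneUnion

/-- `P` is the principal truncation of `M` to the flat spanned by `S`. -/
def IsPrincipalTruncation (M : Matroid α) (S : Set α) (P : Matroid α) : Prop :=
  P.E = M.E ∧ ∀ X, P.Indep X ↔ M.Indep X ∧ ¬ S ⊆ M.closure X

theorem IsRankOneUnion.isPrincipalTruncation_dual {M U : Matroid α} {S : Set α} [M.Finite]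
    (hU : IsRankOneUnion M✶ S U) (hS : ∃ e ∈ S, ¬ M✶.IsColoop e) :
    IsPrincipalTruncation M S U✶ := by
  refine ⟨hU.1, fun X => ?_⟩
  rw [dual_indep_iff_exists']
  simp only [hU.isBase_iff hS]
  constructor
  · rintro ⟨hXE, -, ⟨B₀, hB₀, e, he, heB₀, rfl⟩, hdisj⟩
    obtain ⟨heX, hXB₀⟩ := disjoint_insert_right.1 hdisj
    have hBM : M.IsBase (M.E \ B₀) := hB₀.compl_isBase_of_dual
    have hXB : X ⊆ M.E \ B₀ := subset_sdiff.2 ⟨hU.1 ▸ hXE, hXB₀⟩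
    have heE : e ∈ M.E := hU.subset_ground he
    have hXi : M.Indep X := hBM.indep.subset hXB
    have heX' : e ∉ M.closure X := hXi.notMem_closure_iff.2
      ⟨hBM.indep.subset (insert_subset ⟨heE, heB₀⟩ hXB), heX⟩
    exact ⟨hXi, fun hS => heX' (hS he)⟩
  · rintro ⟨hX, hSX⟩
    obtain ⟨e, he, hecl⟩ := not_subset.1 hSX
    have heE : e ∈ M.E := hU.subset_ground he
    rw [hX.notMem_closure_iff] at hecl
    obtain ⟨B, hB, hsub⟩ := hecl.1.exists_isBase_superset
    refine ⟨hU.1 ▸ hX.subset_ground, _, ⟨M.E \ B, hB.compl_isBase_dual, e, he,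
      fun h => h.2 (hsub (mem_insert _ _)), rfl⟩, ?_⟩
    exact disjoint_insert_right.2
      ⟨hecl.2, disjoint_sdiff_right.mono_left ((subset_insert _ _).trans hsub)⟩

namespace IsPrincipalTruncation

variable {M P : Matroid α} {S F X : Set α} {x : α}

theorem isFlat_of_subset (hP : IsPrincipalTruncation M S P) (hF : M.IsFlat F) (hSF : S ⊆ F) :
    P.IsFlat F := by
  have hFE : F ⊆ P.E := hP.1 ▸ hF.subset_ground
  rw [isFlat_iff_closure_subset hFE]
  intro x hx
  by_contra hxF
  obtain ⟨X, hX⟩ := P.exists_isBasis F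
  obtain ⟨hXM, hSX⟩ := (hP.2 X).1 hX.indep
  obtain ⟨g, hgS, hgX⟩ := not_subset.1 hSX
  have hdep : P.Dep (insert x X) := (hX.indep.mem_closure_iff_of_notMem
    fun h => hxF (hX.subset h)).1 (hX.closure_eq_closure ▸ hx)
  have hxX : x ∉ M.closure X := fun h => hxF (hF.closure_subset_of_subset hX.subset h)
  have hxE : x ∈ M.E := hP.1 ▸ P.closure_subset_ground F hx
  have hxM : M.Indep (insert x X) :=
    (hXM.insert_indep_iff_of_notMem fun h => hxX (M.mem_closure_of_mem h)).2 ⟨hxE, hxX⟩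
  -- `g ∈ S` witnesses `X + x` too: otherwise exchange puts `x` in `cl_M(X + g) ⊆ F`.
  have hSx : ¬ S ⊆ M.closure (insert x X) := fun hS =>
    hxF (hF.closure_subset_of_subset (insert_subset (hSF hgS) hX.subset)
      (closure_exchange ⟨hS hgS, hgX⟩).1)
  exact hdep.not_indep ((hP.2 _).2 ⟨hxM, hSx⟩)

theorem indep_iff_of_not_subset (hP : IsPrincipalTruncation M S P) (hF : M.IsFlat F)
    (hSF : ¬ S ⊆ F) (hXF : X ⊆ F) : P.Indep X ↔ M.Indep X := by
  rw [hP.2, and_iff_left_iff_imp]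
  exact fun _ hS => hSF (hS.trans (hF.closure_subset_of_subset hXF))

theorem mem_closure_iff (hP : IsPrincipalTruncation M S P) (hF : M.IsFlat F) (hSF : ¬ S ⊆ F)
    (hx : x ∈ M.E \ F) : x ∈ P.closure F ↔ S ⊆ M.closure (insert x F) := by
  obtain ⟨I, hI⟩ := M.exists_isBasis F
  have hIP : P.IsBasis I F := by
    refine ((hP.indep_iff_of_not_subset hF hSF hI.subset).2 hI.indep).isBasis_of_forall_insert
      hI.subset fun y hy => ?_
    rw [dep_iff, hP.1]
    exact ⟨fun h => (hI.insert_dep hy).not_indep ((hP.2 _).1 h).1,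
      insert_subset (hF.subset_ground hy.1) hI.indep.subset_ground⟩
  have hxI : x ∉ I := fun h => hx.2 (hI.subset h)
  have hins : M.Indep (insert x I) := (hI.indep.insert_indep_iff_of_notMem hxI).2
    ⟨hx.1, fun h => hx.2 (hF.closure_subset_of_subset hI.subset h)⟩
  rw [← hIP.closure_eq_closure, hIP.indep.mem_closure_iff_of_notMem hxI, dep_iff, hP.2, hP.1,
    closure_insert_congr_right hI.closure_eq_closure]
  simp [hins, insert_subset_iff, hx.1, hI.indep.subset_ground]

theorem isFlat_iff_of_not_subset (hP : IsPrincipalTruncation M S P) (hF : M.IsFlat F)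
    (hSF : ¬ S ⊆ F) : P.IsFlat F ↔ ¬ ∃ x ∈ M.E \ F, S ⊆ M.closure (insert x F) := by
  rw [isFlat_iff_closure_subset (hP.1 ▸ hF.subset_ground)]
  refine ⟨fun h ⟨x, hx, hS⟩ => hx.2 (h ((hP.mem_closure_iff hF hSF hx).2 hS)),
    fun h x hx => by_contra fun hxF => ?_⟩
  have hxE : x ∈ M.E := hP.1 ▸ P.closure_subset_ground F hx
  exact h ⟨x, ⟨hxE, hxF⟩, (hP.mem_closure_iff hF hSF ⟨hxE, hxF⟩).1 hx⟩

end IsPrincipalTruncation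

namespace IsHG

variable {G : Set α} {H : Matroid α}

theorem ground_eq_s15 (hH : IsHG G H) : H.E = univ := by
  obtain ⟨U', hd, ⟨hU'E, -⟩, rfl⟩ := hH
  simp [hU'E]

theorem isBase_iff_s15 [Finite α] (hH : IsHG G H) (hG : Gᶜ.Nonempty) {B : Set α} :
    H.IsBase B ↔ ∃ e ∈ Gᶜ, B = {e}ᶜ := by
  obtain ⟨U', hd, ⟨hU'E, hU'B⟩, rfl⟩ := hH
  simp only [disjointSum_isBase_iff, freeOn_ground, freeOn_isBase_iff, hU'E, hU'B,
    inter_subset_right, true_and, (toFinite Gᶜ).encard_eq_ncard_sub_one_iff inter_subset_right hG,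
    union_compl_self, subset_univ, and_true]
  simp only [Set.ext_iff, mem_inter_iff, mem_sdiff, mem_compl_iff, mem_singleton_iff]
  grind

theorem dual_indep_iff_s15 [Finite α] (hH : IsHG G H) (hG : Gᶜ.Nonempty) {J : Set α} :
    H✶.Indep J ↔ ∃ e ∈ Gᶜ, J ⊆ {e} := by
  simp [dual_indep_iff_exists', hH.isBase_iff_s15 hG, hH.ground_eq_s15, disjoint_compl_right_iff_subset]

end IsHG

theorem matroidInter_HG_flat_iff_general [Fintype α] (M H P : Matroid α) (G : Set α)
    (hMr : (2 : ℕ∞) ≤ M.rk')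
    (hG : G.ncard ≤ Fintype.card α - 2) (hH : IsHG G H)
    (hP : IsMatroidInter M H P) (hPl : P.Loopless')
    (F : Set α) (hFM : M.IsFlat F) :
    P.IsFlat F ↔ (F ∪ G = Set.univ ∨
      ¬ ∃ F', M.IsFlat F' ∧ F ⊂ F' ∧
        (¬ ∃ F'', M.IsFlat F'' ∧ F ⊂ F'' ∧ F'' ⊂ F') ∧ F' ∪ G = Set.univ) := by
  obtain ⟨U, hU, rfl⟩ := hP
  have hGc : Gᶜ.Nonempty := by
    have h2 : (2 : ℕ∞) ≤ Fintype.card α :=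
      hMr.trans (M.rk'_le_encard_ground.trans ((encard_le_encard (subset_univ _)).trans
        (by rw [encard_univ, ENat.card_eq_coe_fintype_card])))
    refine nonempty_compl.2 fun hGu => ?_
    rw [hGu, ncard_univ, Nat.card_eq_fintype_card] at hG
    have : 2 ≤ Fintype.card α := by exact_mod_cast h2
    omega
  have hR : IsRankOneUnion M✶ Gᶜ U := hU.isRankOneUnion fun _ => hH.dual_indep_iff_s15 hGc
  have hT := hR.isPrincipalTruncation_dual (hR.exists_not_isColoop hGc hPl)
  simp_rw [union_comm _ G, ← compl_subset_iff_union]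
  by_cases hGF : Gᶜ ⊆ F
  · exact iff_of_true (hT.isFlat_of_subset hFM hGF) (Or.inl hGF)
  · rw [or_iff_right hGF, hT.isFlat_iff_of_not_subset hFM hGF, hFM.exists_covBy_superset_iff]

/-- Let `M` be a matroid of rank at least `2` and `H_G` a corank-one matroid such that
`M ∧ H_G` is loopfree. A set `F` that is a flat of both `M` and `H_G` is a flat of
`M ∧ H_G` if and only if either `F ∪ G = E`, or no flat `F'` of `M` covering `F`
satisfies `F' ∪ G = E`. -/
theorem matroidInter_HG_flat_iff [Fintype α] (M H P : Matroid α) (G : Set α)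
    (hME : M.E = Set.univ) (hMr : (2 : ℕ∞) ≤ M.rk')
    (hG : G.ncard ≤ Fintype.card α - 2) (hH : IsHG G H)
    (hP : IsMatroidInter M H P) (hPl : P.Loopless')
    (F : Set α) (hFM : M.IsFlat F) (hFH : H.IsFlat F) :
    P.IsFlat F ↔ (F ∪ G = Set.univ ∨
      ¬ ∃ F', M.IsFlat F' ∧ F ⊂ F' ∧
        (¬ ∃ F'', M.IsFlat F'' ∧ F ⊂ F'' ∧ F'' ⊂ F') ∧ F' ∪ G = Set.univ) :=
  matroidInter_HG_flat_iff_general M H P G hMr hG hH hP hPl F hFM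
end
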